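/- Horizontal recurrence for exponential Riordan arrays via the A-sequence: with d, g ∈ ℚ[[t]], d(0)=g(0)=1, h(t)=t·g(t) having compositional inverse h^{⟨−1⟩}, let A(t) := g(h^{⟨−1⟩}(t)) and a_i := i!·[t^i] A(t). Then the entries r_{n,k} := n!·[t^n] d(t)·h(t)^k/k! satisfy, for all n ≥ k ≥ 1: k·r_{n,k} = n · Σ_{i=0}^{n−k} C(k−1+i, i) · a_i · r_{n−1, k−1+i}. -/

import Mathlib

/-!
Write `h = t g`. Every series `f` is `F(h)` for some `F`, since `[t^m] Σ F_i h^i = f_m` is a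
triangular system with unit diagonal `[t^m] h^m = g(0)^m = 1`. Substituting the right inverse
`h^{⟨-1⟩}` identifies `F = f(h^{⟨-1⟩})`; for `f = g` this gives `g = A(h)`. Hence
`[t^{n+1}] d h^{k+1} = [t^n] g · d h^k = Σ_i [t^i] A · [t^n] d h^{k+i}`, and multiplying by
the factorials of the exponential normalisation turns this into the recurrence.
-/

open PowerSeries

/-- Composition `f(u)` of formal power series, valid when `u` has zero constant
coefficient: then `coeff n (u^k) = 0` for `k > n`, so the `n`-th coefficient of
`f(u) = Σ_k (coeff k f)·u^k` only involves terms with `k ≤ n`. -/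
noncomputable def PowerSeries.comp' {R : Type*} [CommRing R] (f u : PowerSeries R) :
    PowerSeries R :=
  PowerSeries.mk fun n =>
    PowerSeries.coeff n (∑ k ∈ Finset.range (n + 1), PowerSeries.C (PowerSeries.coeff k f) * u ^ k)

open Finset

namespace PowerSeries

variable {R : Type*} [CommRing R] {u : R⟦X⟧}

theorem coeff_mul_pow_eq_zero_of_lt (hu : constantCoeff u = 0) (v : R⟦X⟧) {n k : ℕ}
    (h : n < k) : coeff n (v * u ^ k) = 0 := by
  obtain ⟨w, rfl⟩ := X_dvd_iff.mpr hu
  rw [mul_pow, mul_left_comm, coeff_X_pow_mul', if_neg (by omega)]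

theorem coeff_subst_eq_sum_range (hu : constantCoeff u = 0) (f : R⟦X⟧) {n N : ℕ}
    (hN : n < N) : coeff n (f.subst u) = ∑ i ∈ range N, coeff i f * coeff n (u ^ i) := by
  rw [coeff_subst' (HasSubst.of_constantCoeff_zero' hu)]
  refine finsum_eq_sum_of_support_subset _ fun i hi => mem_range.mpr (not_le.mp fun hNi => hi ?_)
  beta_reduce
  rw [smul_eq_mul, ← one_mul (u ^ i), coeff_mul_pow_eq_zero_of_lt hu 1 (by omega), mul_zero]

theorem comp'_eq_subst (hu : constantCoeff u = 0) (f : R⟦X⟧) : f.comp' u = f.subst u := by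
  ext n
  rw [comp', coeff_mk, map_sum, coeff_subst_eq_sum_range hu f (lt_add_one n)]
  simp only [coeff_C_mul]

theorem coeff_subst_mul (hu : constantCoeff u = 0) (f v : R⟦X⟧) (n : ℕ) :
    coeff n (f.subst u * v) = ∑ i ∈ range (n + 1), coeff i f * coeff n (u ^ i * v) := by
  simp_rw [coeff_mul, mul_sum]
  rw [sum_comm]
  refine sum_congr rfl fun p hp => ?_
  rw [coeff_subst_eq_sum_range hu f (N := n + 1) (by simp at hp; omega), sum_mul]
  exact sum_congr rfl fun i _ => mul_assoc _ _ _

theorem coeff_X_mul_pow_self (g : R⟦X⟧) (m : ℕ) :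
    coeff m ((X * g) ^ m) = constantCoeff g ^ m := by
  rw [mul_pow, coeff_X_pow_mul', if_pos le_rfl, Nat.sub_self, coeff_zero_eq_constantCoeff,
    map_pow]

noncomputable def substXMulPreimageCoeff (g f : R⟦X⟧) : ℕ → R
  | m => coeff m f - ∑ i : Fin m, substXMulPreimageCoeff g f i * coeff m ((X * g) ^ (i : ℕ))

theorem coeff_eq_sum_substXMulPreimageCoeff {g : R⟦X⟧} (hg : constantCoeff g = 1) (f : R⟦X⟧)
    (m : ℕ) : coeff m f =
      ∑ i ∈ range (m + 1), substXMulPreimageCoeff g f i * coeff m ((X * g) ^ i) := by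
  rw [sum_range_succ, coeff_X_mul_pow_self, hg, one_pow, mul_one, substXMulPreimageCoeff,
    Fin.sum_univ_eq_sum_range (fun i => substXMulPreimageCoeff g f i * coeff m ((X * g) ^ i))]
  ring

theorem exists_subst_X_mul_eq {g : R⟦X⟧} (hg : constantCoeff g = 1) (f : R⟦X⟧) :
    ∃ F : R⟦X⟧, F.subst (X * g) = f := by
  refine ⟨mk (substXMulPreimageCoeff g f), ext fun m => ?_⟩
  rw [coeff_subst_eq_sum_range (by simp) _ (lt_add_one m),
    coeff_eq_sum_substXMulPreimageCoeff hg f m]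
  simp only [coeff_mk]

theorem subst_subst_X_mul_of_subst_eq_X {g v : R⟦X⟧} (hg : constantCoeff g = 1)
    (hv : constantCoeff v = 0) (hgv : (X * g).subst v = (X : R⟦X⟧)) (f : R⟦X⟧) :
    subst (X * g) (subst v f) = f := by
  obtain ⟨F, rfl⟩ := exists_subst_X_mul_eq hg f
  rw [subst_comp_subst_apply (HasSubst.of_constantCoeff_zero' (by simp))
    (HasSubst.of_constantCoeff_zero' hv), hgv, X_subst]

theorem coeff_succ_mul_X_mul_pow_succ {g v : R⟦X⟧} (hg : constantCoeff g = 1)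
    (hv : constantCoeff v = 0) (hgv : (X * g).subst v = (X : R⟦X⟧)) (d : R⟦X⟧) {n k : ℕ}
    (hkn : k ≤ n) :
    coeff (n + 1) (d * (X * g) ^ (k + 1)) =
      ∑ i ∈ range (n - k + 1), coeff i (g.subst v) * coeff n (d * (X * g) ^ (k + i)) := by
  have hXg : constantCoeff (X * g) = 0 := by simp
  have hA : subst (X * g) (subst v g) = g := subst_subst_X_mul_of_subst_eq_X hg hv hgv g
  have hsum := coeff_subst_mul hXg (subst v g) (d * (X * g) ^ k) n
  rw [hA] at hsum
  calc coeff (n + 1) (d * (X * g) ^ (k + 1)) = coeff n (g * (d * (X * g) ^ k)) := by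
        rw [show d * (X * g) ^ (k + 1) = X * (g * (d * (X * g) ^ k)) by ring, coeff_succ_X_mul]
    _ = ∑ i ∈ range (n + 1), coeff i (g.subst v) * coeff n (d * (X * g) ^ (k + i)) := by
        rw [hsum]
        exact sum_congr rfl fun i _ => by ring_nf
    _ = _ := (sum_subset (range_subset_range.mpr (by omega)) fun i _ hi => by
        rw [coeff_mul_pow_eq_zero_of_lt hXg d (by simp at hi; omega), mul_zero]).symm

end PowerSeries

theorem riordan_horizontal_recurrence_general (d g hinv : PowerSeries ℚ)
    (hg : PowerSeries.constantCoeff g = 1)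
    (hinv0 : PowerSeries.constantCoeff hinv = 0)
    (hinvEq : PowerSeries.comp' (PowerSeries.X * g) hinv = PowerSeries.X)
    (r : ℕ → ℕ → ℚ)
    (hr : ∀ n k, r n k =
      (n.factorial : ℚ) * PowerSeries.coeff n (d * (PowerSeries.X * g) ^ k) /
        (k.factorial : ℚ))
    (n k : ℕ) (hk : 1 ≤ k) (hkn : k ≤ n) :
    (k : ℚ) * r n k =
      (n : ℚ) * ∑ i ∈ Finset.range (n - k + 1),
        ((k - 1 + i).choose i : ℚ) *
          ((i.factorial : ℚ) * PowerSeries.coeff i (PowerSeries.comp' g hinv)) *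
          r (n - 1) (k - 1 + i) := by
  rw [comp'_eq_subst hinv0] at hinvEq ⊢
  obtain ⟨k, rfl⟩ := Nat.exists_eq_add_of_le' hk
  obtain ⟨n, rfl⟩ := Nat.exists_eq_add_of_le' (hk.trans hkn)
  simp only [Nat.add_sub_cancel, Nat.add_sub_add_right]
  rw [hr, coeff_succ_mul_X_mul_pow_succ hg hinv0 hinvEq d (by omega), mul_sum, mul_sum, sum_div,
    mul_sum]
  refine sum_congr rfl fun i _ => ?_
  rw [hr, ← Nat.choose_symm_add, Nat.cast_add_choose, Nat.factorial_succ, Nat.factorial_succ]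
  push_cast
  field_simp

/-- Horizontal recurrence via the A-sequence: with `h = t·g`, compositional inverse
`hinv` of `h` (`hinv(0) = 0`, `h(hinv(t)) = t`), `A = g∘hinv` and `a_i = i!·[t^i] A`,
the entries `r_{n,k} = n!·[t^n] d·h^k/k!` satisfy, for `n ≥ k ≥ 1`:
`k·r_{n,k} = n·Σ_{i=0}^{n-k} C(k-1+i,i)·a_i·r_{n-1,k-1+i}`. -/
theorem riordan_horizontal_recurrence (d g hinv : PowerSeries ℚ)
    (hd : PowerSeries.constantCoeff d = 1)
    (hg : PowerSeries.constantCoeff g = 1)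
    (hinv0 : PowerSeries.constantCoeff hinv = 0)
    (hinvEq : PowerSeries.comp' (PowerSeries.X * g) hinv = PowerSeries.X)
    (r : ℕ → ℕ → ℚ)
    (hr : ∀ n k, r n k =
      (n.factorial : ℚ) * PowerSeries.coeff n (d * (PowerSeries.X * g) ^ k) /
        (k.factorial : ℚ))
    (n k : ℕ) (hk : 1 ≤ k) (hkn : k ≤ n) :
    (k : ℚ) * r n k =
      (n : ℚ) * ∑ i ∈ Finset.range (n - k + 1),
        ((k - 1 + i).choose i : ℚ) *
          ((i.factorial : ℚ) * PowerSeries.coeff i (PowerSeries.comp' g hinv)) *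
          r (n - 1) (k - 1 + i) :=
  riordan_horizontal_recurrence_general d g hinv hg hinv0 hinvEq r hr n k hk hkn
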